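/- arXiv:1506.02445 — 2 statements merged into one kernel-verified Lean document; each statement's English description precedes it below -/
import Mathlib

section
/- For n > 6, in any (K_4, K_4[n])-saturated graph, no two vertices of degree exactly 4 are adjacent. -/
open SimpleGraph

/-- The blow-up `H[n]` of a graph `H` onto parts of size `n`: each vertex of `H` is
replaced by an independent set of size `n`, each edge by a complete bipartite graph. -/
def blowup {V : Type*} (H : SimpleGraph V) (n : ℕ) : SimpleGraph (V × Fin n) :=
  SimpleGraph.comap Prod.fst H

/-- `f` selects one vertex in each part of the blow-up, forming a partite copy of `H` in `G`. -/
def IsPartiteCopy {V : Type*} {n : ℕ} (H : SimpleGraph V) (G : SimpleGraph (V × Fin n))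
    (f : V → Fin n) : Prop :=
  ∀ ⦃u v : V⦄, H.Adj u v → G.Adj (u, f u) (v, f v)

/-- `G ⊆ H[n]` is `(H,H[n])`-partite-saturated: it has no partite copy of `H`, but adding
any edge of `H[n]` not in `G` creates a partite copy of `H`. -/
def PartiteSaturated {V : Type*} {n : ℕ} (H : SimpleGraph V)
    (G : SimpleGraph (V × Fin n)) : Prop :=
  G ≤ blowup H n ∧ (¬ ∃ f, IsPartiteCopy H G f) ∧
    ∀ ⦃x y : V × Fin n⦄, (blowup H n).Adj x y → ¬ G.Adj x y →
      ∃ f, IsPartiteCopy H (G ⊔ SimpleGraph.fromEdgeSet {s(x, y)}) f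

/-- The degree of a vertex. -/
noncomputable def deg {α : Type*} (G : SimpleGraph α) (v : α) : ℕ := (G.neighborSet v).ncard

/-- `G ⊆ K_r[n]` is `(K_r,K_r[n])`-saturated: `G` is `K_r`-free but adding any edge of
`K_r[n]` not in `G` creates a copy of `K_r`. -/
def CliqueSaturated (r n : ℕ) (G : SimpleGraph (Fin r × Fin n)) : Prop :=
  G ≤ blowup (⊤ : SimpleGraph (Fin r)) n ∧ G.CliqueFree r ∧
    ∀ ⦃x y : Fin r × Fin n⦄, (blowup (⊤ : SimpleGraph (Fin r)) n).Adj x y → ¬ G.Adj x y →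
      ¬ (G ⊔ SimpleGraph.fromEdgeSet {s(x, y)}).CliqueFree r

/-!
Let `u ~ v` have degree `4`. Saturation says that two non-adjacent vertices `x, y` in different
parts have, in any two of the remaining parts, adjacent common neighbours. Applied to the
non-neighbours of `u`, this forces a second neighbour `v'` of `u` in the part of `v` (otherwise
`v` is adjacent to all non-neighbours of `u` in a third part, so `deg v ≥ n - 2 > 4`) and an edge
`xy` in the two remaining parts, so `N(u) = {v, v', x, y}`. If `v ≁ y`, a non-neighbour of `u` in
the part of `x` yields `v' ~ y`, hence `v' ≁ x`, and then every non-neighbour of `u` in the part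
of `y` is adjacent to `v`, again `deg v ≥ n - 2`. So `v ~ x` and `v ~ y`, and `{u, v, x, y}` is a
`K_4`.
-/

section General

variable {α : Type*} {G : SimpleGraph α}

lemma not_cliqueFree_four_of_adj {a b c d : α} (hab : G.Adj a b) (hac : G.Adj a c)
    (had : G.Adj a d) (hbc : G.Adj b c) (hbd : G.Adj b d) (hcd : G.Adj c d) :
    ¬ G.CliqueFree 4 := by
  classical
  have hbcd : G.IsNClique 3 {b, c, d} := is3Clique_triple_iff.mpr ⟨hbc, hbd, hcd⟩
  exact (hbcd.insert (a := a) (by simp [hab, hac, had])).not_cliqueFree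

lemma ncard_add_two_le_deg_add_deg [Finite α] {u v : α} {S : Set α} (huv : G.Adj u v)
    (hu : u ∉ S) (hv : v ∉ S) (h : ∀ w ∈ S, ¬ G.Adj u w → G.Adj v w) :
    S.ncard + 2 ≤ deg G u + deg G v := by
  have hout : insert u (S \ G.neighborSet u) ⊆ G.neighborSet v :=
    Set.insert_subset huv.symm fun w hw => h w hw.1 hw.2
  have hin : insert v (S ∩ G.neighborSet u) ⊆ G.neighborSet u :=
    Set.insert_subset huv Set.inter_subset_right
  have h1 := Set.ncard_le_ncard hout
  have h2 := Set.ncard_le_ncard hin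
  rw [Set.ncard_insert_of_notMem fun h => hu h.1] at h1
  rw [Set.ncard_insert_of_notMem fun h => hv h.1] at h2
  have := Set.ncard_inter_add_ncard_sdiff_eq_ncard S (G.neighborSet u)
  unfold deg
  omega

end General

lemma exists_two_ne_of_ne {a b : Fin 4} (hab : a ≠ b) :
    ∃ p q : Fin 4, p ≠ q ∧ p ≠ a ∧ p ≠ b ∧ q ≠ a ∧ q ≠ b := by
  revert a b
  decide

section Blowup

variable {r n : ℕ}

lemma ncard_fst_preimage_singleton (p : Fin r) :
    (Prod.fst ⁻¹' {p} : Set (Fin r × Fin n)).ncard = n := by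
  rw [← Set.prod_univ, Set.ncard_prod, Set.ncard_singleton, Set.ncard_univ, Nat.card_fin,
    one_mul]

lemma exists_fst_eq_not_adj {G : SimpleGraph (Fin r × Fin n)} {u : Fin r × Fin n}
    (h : deg G u < n) (p : Fin r) : ∃ w : Fin r × Fin n, w.1 = p ∧ ¬ G.Adj u w := by
  by_contra! hall
  have hsub : Prod.fst ⁻¹' {p} ⊆ G.neighborSet u := fun w hw => hall w hw
  have := Set.ncard_le_ncard hsub
  rw [ncard_fst_preimage_singleton] at this
  exact absurd this (not_le.mpr h)

lemma exists_fst_eq_of_isNClique {G : SimpleGraph (Fin r × Fin n)}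
    (hle : G ≤ blowup ⊤ n) {t : Finset (Fin r × Fin n)} (ht : G.IsNClique r t) (p : Fin r) :
    ∃ a ∈ t, a.1 = p := by
  classical
  have hinj : Set.InjOn Prod.fst (t : Set (Fin r × Fin n)) := fun a ha b hb hab =>
    by_contra fun hne => hle (ht.1 ha hb hne) hab
  have himage : t.image Prod.fst = Finset.univ := Finset.eq_univ_of_card _ <| by
    rw [Finset.card_image_of_injOn hinj, ht.2, Fintype.card_fin]
  exact Finset.mem_image.mp (himage ▸ Finset.mem_univ p)

end Blowup

namespace CliqueSaturated

section Partite

variable {r n : ℕ} {G : SimpleGraph (Fin r × Fin n)}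

lemma fst_ne_of_adj (hG : CliqueSaturated r n G) {a b : Fin r × Fin n} (h : G.Adj a b) :
    a.1 ≠ b.1 :=
  hG.1 h

lemma exists_adj_adj_of_not_adj (hG : CliqueSaturated r n G) {x y : Fin r × Fin n}
    (hxy : x.1 ≠ y.1) (hnxy : ¬ G.Adj x y) {p q : Fin r} (hpq : p ≠ q)
    (hpx : p ≠ x.1) (hpy : p ≠ y.1) (hqx : q ≠ x.1) (hqy : q ≠ y.1) :
    ∃ b c : Fin r × Fin n, b.1 = p ∧ c.1 = q ∧ G.Adj x b ∧ G.Adj y b ∧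
      G.Adj x c ∧ G.Adj y c ∧ G.Adj b c := by
  classical
  -- the `r`-clique created by the edge `xy` contains `x` and `y` and meets every part
  obtain ⟨t, ht⟩ : ∃ t, (G ⊔ edge x y).IsNClique r t := not_forall_not.mp (hG.2.2 hxy hnxy)
  have hle : G ⊔ edge x y ≤ blowup ⊤ n := sup_le hG.1 ((edge_le_iff _).mpr (Or.inr hxy))
  have hxt : x ∈ t := hG.2.1.mem_of_sup_edge_isNClique ht
  have hyt : y ∈ t := hG.2.1.mem_of_sup_edge_isNClique (edge_comm x y ▸ ht)
  obtain ⟨hGy, hGx⟩ := (isClique_sup_edge_of_ne_iff (ne_of_apply_ne Prod.fst hxy)).mp ht.1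
  obtain ⟨b, hbt, rfl⟩ := exists_fst_eq_of_isNClique hle ht p
  obtain ⟨c, hct, rfl⟩ := exists_fst_eq_of_isNClique hle ht q
  have hmem : ∀ a ∈ t, ∀ z : Fin r × Fin n, a.1 ≠ z.1 → a ∈ (↑t \ {z} : Set _) :=
    fun a ha z h => ⟨ha, fun hz => h (congrArg Prod.fst hz)⟩
  have hne : ∀ {a z : Fin r × Fin n}, a.1 ≠ z.1 → a ≠ z := ne_of_apply_ne Prod.fst
  exact ⟨b, c, rfl, rfl,
    hGx (hmem x hxt y hxy) (hmem b hbt y hpy) (hne hpx.symm),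
    hGy (hmem y hyt x hxy.symm) (hmem b hbt x hpx) (hne hpy.symm),
    hGx (hmem x hxt y hxy) (hmem c hct y hqy) (hne hqx.symm),
    hGy (hmem y hyt x hxy.symm) (hmem c hct x hqx) (hne hqy.symm),
    hGx (hmem b hbt y hpy) (hmem c hct y hqy) (hne hpq)⟩

end Partite

section DegreeFour

variable {n : ℕ} {G : SimpleGraph (Fin 4 × Fin n)}

lemma exists_adj_fst_eq_ne_of_deg_eq_four (hG : CliqueSaturated 4 n G) (hn : 6 < n)
    {u v : Fin 4 × Fin n} (hu : deg G u = 4) (hv : deg G v = 4) (huv : G.Adj u v) :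
    ∃ v', v' ≠ v ∧ v'.1 = v.1 ∧ G.Adj u v' := by
  by_contra! honly
  obtain ⟨p, q, hpq, hpu, hpv, hqu, hqv⟩ := exists_two_ne_of_ne (hG.fst_ne_of_adj huv)
  have hvp : ∀ w ∈ Prod.fst ⁻¹' {p}, ¬ G.Adj u w → G.Adj v w := by
    rintro w (rfl : w.1 = p) huw
    obtain ⟨b, -, hb, -, hub, hwb, -⟩ := hG.exists_adj_adj_of_not_adj hpu.symm huw hqv.symm
      (hG.fst_ne_of_adj huv).symm hpv.symm hqu hpq.symm
    obtain rfl : b = v := by_contra fun hbv => honly b hbv hb hub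
    exact hwb.symm
  have := ncard_add_two_le_deg_add_deg huv (fun h => hpu h.symm) (fun h => hpv h.symm) hvp
  rw [ncard_fst_preimage_singleton, hu, hv] at this
  omega

lemma adj_of_neighborSet_eq (hG : CliqueSaturated 4 n G) (hn : 6 < n)
    {u v v' x y : Fin 4 × Fin n} (hu : deg G u = 4) (hv : deg G v = 4)
    (hN : G.neighborSet u = {v, v', x, y}) (hv' : v'.1 = v.1) (hxv : x.1 ≠ v.1)
    (hyv : y.1 ≠ v.1) (hxy : G.Adj x y) : G.Adj v y := by
  by_contra hvy
  have hadj : ∀ z, G.Adj u z ↔ z = v ∨ z = v' ∨ z = x ∨ z = y := fun z => by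
    rw [← mem_neighborSet, hN]
    rfl
  have huv := (hadj v).mpr (by simp)
  have huv' := (hadj v').mpr (by simp)
  have hux := (hadj x).mpr (by simp)
  have huy := (hadj y).mpr (by simp)
  have hUV := hG.fst_ne_of_adj huv
  have hUX := hG.fst_ne_of_adj hux
  have hUY := hG.fst_ne_of_adj huy
  have hXY := hG.fst_ne_of_adj hxy
  have hpart : ∀ z, G.Adj u z → (z.1 = v.1 → z = v ∨ z = v') ∧ (z.1 = x.1 → z = x) ∧
      (z.1 = y.1 → z = y) := fun z hz => by
    have := (hadj z).mp hz
    grind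
  have hv'y : G.Adj v' y := by
    obtain ⟨w, hw, huw⟩ := exists_fst_eq_not_adj (by omega : deg G u < n) x.1
    obtain ⟨b, c, hb, hc, hub, -, huc, -, hbc⟩ :=
      hG.exists_adj_adj_of_not_adj (hw ▸ hUX) huw (Ne.symm hyv) hUV.symm (hw ▸ hxv.symm)
        hUY.symm (hw ▸ hXY.symm)
    obtain rfl := (hpart c huc).2.2 hc
    rcases (hpart b hub).1 hb with rfl | rfl
    · exact absurd hbc hvy
    · exact hbc
  have hv'x : ¬ G.Adj v' x := fun h => not_cliqueFree_four_of_adj huv' hux huy h hv'y hxy hG.2.1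
  have hvY : ∀ w ∈ Prod.fst ⁻¹' {y.1}, ¬ G.Adj u w → G.Adj v w := by
    rintro w (hw : w.1 = y.1) huw
    obtain ⟨b, c, hb, hc, hub, hwb, huc, -, hbc⟩ :=
      hG.exists_adj_adj_of_not_adj (hw ▸ hUY) huw hxv.symm hUV.symm (hw ▸ hyv.symm)
        hUX.symm (hw ▸ hXY)
    obtain rfl := (hpart c huc).2.1 hc
    rcases (hpart b hub).1 hb with rfl | rfl
    · exact hwb.symm
    · exact absurd hbc hv'x
  have := ncard_add_two_le_deg_add_deg huv hUY hyv.symm hvY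
  rw [ncard_fst_preimage_singleton, hu, hv] at this
  omega

end DegreeFour

end CliqueSaturated

/-- For `n > 6`, in any `(K_4,K_4[n])`-saturated graph, no two vertices of degree
exactly `4` are adjacent. -/
theorem stmt_2 (n : ℕ) (hn : 6 < n) (G : SimpleGraph (Fin 4 × Fin n))
    (hG : CliqueSaturated 4 n G) :
    ∀ u v : Fin 4 × Fin n, deg G u = 4 → deg G v = 4 → ¬ G.Adj u v := by
  intro u v hu hv huv
  obtain ⟨v', hv'v, hv', huv'⟩ := hG.exists_adj_fst_eq_ne_of_deg_eq_four hn hu hv huv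
  obtain ⟨w, hw, huw⟩ := exists_fst_eq_not_adj (by omega : deg G u < n) v.1
  obtain ⟨p, q, hpq, hpu, hpv, hqu, hqv⟩ := exists_two_ne_of_ne (hG.fst_ne_of_adj huv)
  obtain ⟨x, y, rfl, rfl, hux, -, huy, -, hxy⟩ := hG.exists_adj_adj_of_not_adj
    (hw ▸ hG.fst_ne_of_adj huv) huw hpq hpu (hw ▸ hpv) hqu (hw ▸ hqv)
  have hN : G.neighborSet u = {v, v', x, y} := by
    refine (Set.eq_of_subset_of_ncard_le ?_ ?_).symm
    · simp [Set.insert_subset_iff, huv, huv', hux, huy]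
    · rw [← deg, hu, Set.ncard_insert_of_notMem, Set.ncard_insert_of_notMem, Set.ncard_pair] <;>
        grind
  have hvx := hG.adj_of_neighborSet_eq hn hu hv (Set.pair_comm x y ▸ hN) hv' hqv hpv hxy.symm
  have hvy := hG.adj_of_neighborSet_eq hn hu hv hN hv' hpv hqv hxy
  exact not_cliqueFree_four_of_adj huv hux huy hvx hvy hxy hG.2.1
end

section
/- For any graph H with at least one edge and any n ≥ 1, there exists a (H, H[n])-partite-extra-saturated subgraph of H[n] with at most (2n−1)·e(H) edges, namely a single partite copy of H together with all edges from its vertices to all vertices in adjacent parts. -/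
open SimpleGraph

/-- `G ⊆ H[n]` is `(H,H[n])`-partite-extra-saturated: adding any edge of `H[n]` not in
`G` strictly increases the number of partite copies of `H`. -/
def ExtraSaturated {V : Type*} {n : ℕ} (H : SimpleGraph V)
    (G : SimpleGraph (V × Fin n)) : Prop :=
  G ≤ blowup H n ∧
    ∀ ⦃x y : V × Fin n⦄, (blowup H n).Adj x y → ¬ G.Adj x y →
      Nat.card {f : V → Fin n // IsPartiteCopy H G f} <
        Nat.card {f : V → Fin n //
          IsPartiteCopy H (G ⊔ SimpleGraph.fromEdgeSet {s(x, y)}) f}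

/-- The subgraph of `H[n]` consisting of the partite copy of `H` at index `i` together
with all edges from its vertices to all vertices in adjacent parts. -/
def coneCopy {V : Type*} (H : SimpleGraph V) (n : ℕ) (i : Fin n) :
    SimpleGraph (V × Fin n) where
  Adj x y := H.Adj x.1 y.1 ∧ (x.2 = i ∨ y.2 = i)
  symm := by
    constructor
    rintro x y ⟨h, hi⟩
    exact ⟨h.symm, hi.symm⟩
  loopless := by
    constructor
    rintro x ⟨h, -⟩
    exact H.irrefl h

/-!
If `(u, a)(v, b)` is an edge of `H[n]` missing from the cone over the copy at index `i`, then
`a ≠ i` and `b ≠ i`, so the map sending `u ↦ a`, `v ↦ b` and every other vertex to `i` is a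
partite copy only after the edge is added. For the edge count, the darts of the cone are exactly
the pairs of a dart of `H` and a pair of indices one of which is `i`; there are `2n - 1` such pairs.
-/

section

variable {V : Type*} {n : ℕ}

lemma IsPartiteCopy.mono {H : SimpleGraph V} {G G' : SimpleGraph (V × Fin n)} (hG : G ≤ G')
    {f : V → Fin n} (hf : IsPartiteCopy H G f) : IsPartiteCopy H G' f :=
  fun _ _ huv => hG (hf huv)

lemma natCard_isPartiteCopy_lt [Finite V] {H : SimpleGraph V} {G G' : SimpleGraph (V × Fin n)}
    (hG : G ≤ G') {f : V → Fin n} (hf' : IsPartiteCopy H G' f) (hf : ¬ IsPartiteCopy H G f) :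
    Nat.card {f : V → Fin n // IsPartiteCopy H G f} <
      Nat.card {f : V → Fin n // IsPartiteCopy H G' f} := by
  change Nat.card {f | _} < Nat.card {f | _}
  simp only [Nat.card_coe_set_eq]
  exact Set.ncard_lt_ncard ⟨fun _ => IsPartiteCopy.mono hG, fun h => hf (h hf')⟩ (Set.toFinite _)

lemma coneCopy_le_blowup (H : SimpleGraph V) (i : Fin n) : coneCopy H n i ≤ blowup H n :=
  fun _ _ h => h.1

lemma isPartiteCopy_coneCopy_sup_edge {H : SimpleGraph V} [DecidableEq V] {u v : V}
    (huv : H.Adj u v) (i a b : Fin n) :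
    IsPartiteCopy H (coneCopy H n i ⊔ fromEdgeSet {s((u, a), (v, b))})
      (Function.update (Function.update (fun _ => i) u a) v b) := by
  intro p q hpq
  by_cases hp : p = u ∨ p = v
  · by_cases hq : q = u ∨ q = v
    · right
      rcases hp with rfl | rfl <;> rcases hq with rfl | rfl
      all_goals simp_all [huv.ne, huv.ne', Sym2.eq_swap]
    · left
      refine ⟨hpq, Or.inr ?_⟩
      simp [not_or.1 hq]
  · left
    refine ⟨hpq, Or.inl ?_⟩
    simp [not_or.1 hp]

theorem extraSaturated_coneCopy [Finite V] (H : SimpleGraph V) (i : Fin n) :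
    ExtraSaturated H (coneCopy H n i) := by
  classical
  refine ⟨coneCopy_le_blowup H i, ?_⟩
  rintro ⟨u, a⟩ ⟨v, b⟩ (huv : H.Adj u v) hnot
  have ha : a ≠ i := fun h => hnot ⟨huv, Or.inl h⟩
  have hb : b ≠ i := fun h => hnot ⟨huv, Or.inr h⟩
  refine natCard_isPartiteCopy_lt le_sup_left (isPartiteCopy_coneCopy_sup_edge huv i a b) ?_
  intro h
  have hcone := (h huv).2
  simp [huv.ne, ha, hb] at hcone

lemma card_fst_eq_or_snd_eq {α : Type*} [Fintype α] [DecidableEq α] (a : α) :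
    Fintype.card {p : α × α // p.1 = a ∨ p.2 = a} = 2 * Fintype.card α - 1 := by
  have hcompl : Fintype.card {p : α × α // ¬(p.1 = a ∨ p.2 = a)} =
      (Fintype.card α - 1) * (Fintype.card α - 1) := by
    simp only [not_or]
    rw [Fintype.card_congr (Equiv.subtypeProdEquivProd (p := (· ≠ a)) (q := (· ≠ a))),
      Fintype.card_prod, Fintype.card_subtype_compl, Fintype.card_subtype_eq]
  rw [Fintype.card_subtype_compl, Fintype.card_prod] at hcompl
  have hle := Fintype.card_subtype_le (fun p : α × α => p.1 = a ∨ p.2 = a)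
  rw [Fintype.card_prod] at hle
  obtain ⟨m, hm⟩ : ∃ m, Fintype.card α = m + 1 :=
    Nat.exists_eq_add_one.2 (Fintype.card_pos_iff.2 ⟨a⟩)
  rw [hm] at hcompl hle ⊢
  simp only [Nat.add_sub_cancel] at hcompl
  zify [hle] at hcompl ⊢
  push_cast [show 1 ≤ 2 * (m + 1) by omega]
  linarith

def coneCopyDartEquiv (H : SimpleGraph V) (i : Fin n) :
    (coneCopy H n i).Dart ≃ H.Dart × {p : Fin n × Fin n // p.1 = i ∨ p.2 = i} where
  toFun d := (⟨(d.fst.1, d.snd.1), d.adj.1⟩, ⟨(d.fst.2, d.snd.2), d.adj.2⟩)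
  invFun d := ⟨((d.1.fst, d.2.1.1), (d.1.snd, d.2.1.2)), d.1.adj, d.2.2⟩
  left_inv _ := rfl
  right_inv _ := rfl

theorem ncard_edgeSet_coneCopy [Fintype V] (H : SimpleGraph V) (i : Fin n) :
    (coneCopy H n i).edgeSet.ncard = (2 * n - 1) * H.edgeSet.ncard := by
  classical
  have hdarts := Fintype.card_congr (coneCopyDartEquiv H i)
  rw [Fintype.card_prod, card_fst_eq_or_snd_eq, Fintype.card_fin,
    dart_card_eq_twice_card_edges, dart_card_eq_twice_card_edges] at hdarts
  rw [← coe_edgeFinset, ← coe_edgeFinset, Set.ncard_coe_finset, Set.ncard_coe_finset]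
  linarith

end

theorem stmt_18_general {V : Type*} [Fintype V] (H : SimpleGraph V)
    (n : ℕ) (i : Fin n) :
    ExtraSaturated H (coneCopy H n i) ∧
      (coneCopy H n i).edgeSet.ncard ≤ (2 * n - 1) * H.edgeSet.ncard :=
  ⟨extraSaturated_coneCopy H i, (ncard_edgeSet_coneCopy H i).le⟩

/-- For any graph `H` with at least one edge and `n ≥ 1`, the graph consisting of a
single partite copy of `H` together with all edges from its vertices to all vertices in
adjacent parts is `(H,H[n])`-partite-extra-saturated and has at most `(2n-1)·e(H)`
edges. -/
theorem stmt_18 {V : Type*} [Fintype V] (H : SimpleGraph V)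
    (he : H.edgeSet.Nonempty) (n : ℕ) (hn : 1 ≤ n) (i : Fin n) :
    ExtraSaturated H (coneCopy H n i) ∧
      (coneCopy H n i).edgeSet.ncard ≤ (2 * n - 1) * H.edgeSet.ncard :=
  stmt_18_general H n i
end
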